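/- arXiv:1409.2937 — 2 statements merged into one kernel-verified Lean document; each statement's English description precedes it below -/
import Mathlib

section
/- For all odd positive integers n, the number of divisors d(n) satisfies d(n) ≤ 1.8 · n^(1/3). -/
/-! The quotient `d(n)^3 / n` is multiplicative, with factor `(a + 1)^3 / p^a` at each prime
power `p^a ∥ n`. For odd `p` this factor is at most `3`, `8/5`, `8/7` for `p = 3, 5, 7` and at
most `1` for `p ≥ 11`, so `d(n)^3 ≤ (192/35) n`, and `192/35 < 1.8^3 = 5.832`. -/

open Finset

theorem Nat.card_divisors_pow_le_prod_mul {n k : ℕ} (hn : n ≠ 0) (c : ℕ → ℝ)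
    (hc : ∀ p ∈ n.primeFactors, ∀ a : ℕ, ((a : ℝ) + 1) ^ k ≤ c p * (p : ℝ) ^ a) :
    (#n.divisors : ℝ) ^ k ≤ (∏ p ∈ n.primeFactors, c p) * n := by
  have hn' : (n : ℝ) = ∏ p ∈ n.primeFactors, (p : ℝ) ^ n.factorization p := by
    exact_mod_cast Nat.prod_primeFactors_pow_factorization hn
  rw [hn', Nat.card_divisors hn, ← prod_mul_distrib]
  push_cast
  rw [← prod_pow]
  exact prod_le_prod (fun _ _ => by positivity) fun p hp => hc p hp _

theorem Nat.succ_pow_three_le_three_pow_succ (a : ℕ) : (a + 1) ^ 3 ≤ 3 ^ (a + 1) := by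
  induction a with
  | zero => norm_num
  | succ a ih =>
    rcases le_or_gt a 1 with h | h
    · interval_cases a <;> norm_num
    · have hstep := Nat.pow_le_pow_left (show 3 * (a + 1 + 1) ≤ 4 * (a + 1) by omega) 3
      rw [mul_pow, mul_pow, pow_succ 3] at *
      omega

theorem Nat.mul_succ_pow_three_le_eight_mul_pow {p : ℕ} (hp4 : 4 ≤ p) (hp8 : p ≤ 8) (a : ℕ) :
    p * (a + 1) ^ 3 ≤ 8 * p ^ a := by
  induction a with
  | zero => simpa
  | succ a ih =>
    rcases Nat.eq_zero_or_pos a with rfl | h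
    · simp [mul_comm]
    · have hstep := Nat.pow_le_pow_left (show 2 * (a + 1 + 1) ≤ 3 * (a + 1) by omega) 3
      have hratio : (a + 1 + 1) ^ 3 ≤ p * (a + 1) ^ 3 := by
        have := Nat.mul_le_mul_right ((a + 1) ^ 3) hp4
        norm_num [mul_pow] at hstep
        omega
      calc p * (a + 1 + 1) ^ 3 ≤ p * (p * (a + 1) ^ 3) := Nat.mul_le_mul_left p hratio
        _ ≤ p * (8 * p ^ a) := Nat.mul_le_mul_left p ih
        _ = 8 * p ^ (a + 1) := by ring

theorem Nat.succ_pow_three_le_pow {p : ℕ} (hp : 8 ≤ p) (a : ℕ) : (a + 1) ^ 3 ≤ p ^ a :=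
  calc (a + 1) ^ 3 ≤ (2 ^ a) ^ 3 := Nat.pow_le_pow_left Nat.lt_two_pow_self 3
    _ = 8 ^ a := by rw [← pow_mul, mul_comm, pow_mul]; norm_num
    _ ≤ p ^ a := Nat.pow_le_pow_left hp a

/-- The supremum of `(a + 1) ^ 3 / p ^ a` over `a : ℕ` for an odd prime `p`: it is attained at
`a = 2` for `p = 3`, at `a = 1` for `p = 5, 7`, and at `a = 0` for `p ≥ 11`. -/
noncomputable def divisorCubeWeight (p : ℕ) : ℝ :=
  if p = 3 then 3 else if p = 5 ∨ p = 7 then 8 / p else 1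

theorem one_le_divisorCubeWeight (p : ℕ) : 1 ≤ divisorCubeWeight p := by
  unfold divisorCubeWeight
  split_ifs with h3 h57
  · norm_num
  · rw [le_div_iff₀ (by rcases h57 with rfl | rfl <;> norm_num)]
    rcases h57 with rfl | rfl <;> norm_num
  · rfl

theorem succ_pow_three_le_divisorCubeWeight_mul_pow {p : ℕ} (hp : p.Prime) (hp2 : p ≠ 2)
    (a : ℕ) : ((a : ℝ) + 1) ^ 3 ≤ divisorCubeWeight p * (p : ℝ) ^ a := by
  unfold divisorCubeWeight
  split_ifs with h3 h57
  · subst h3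
    rw [Nat.cast_ofNat, ← pow_succ']
    exact_mod_cast Nat.succ_pow_three_le_three_pow_succ a
  · have hp0 : (0 : ℝ) < p := Nat.cast_pos.2 hp.pos
    rw [div_mul_eq_mul_div, le_div_iff₀ hp0, mul_comm]
    exact_mod_cast Nat.mul_succ_pow_three_le_eight_mul_pow (by omega) (by omega) a
  · have hp8 : 8 ≤ p := by
      by_contra! h
      interval_cases p <;> norm_num at *
    rw [one_mul]
    exact_mod_cast Nat.succ_pow_three_le_pow hp8 a

theorem prod_divisorCubeWeight_le (s : Finset ℕ) : ∏ p ∈ s, divisorCubeWeight p ≤ 192 / 35 :=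
  calc ∏ p ∈ s, divisorCubeWeight p = ∏ p ∈ s ∩ {3, 5, 7}, divisorCubeWeight p := by
        refine (prod_subset inter_subset_left fun p _ hp => ?_).symm
        simp_all [divisorCubeWeight]
    _ ≤ ∏ p ∈ {3, 5, 7}, divisorCubeWeight p :=
        prod_le_prod_of_subset_of_one_le inter_subset_right
          (fun p _ => zero_le_one.trans (one_le_divisorCubeWeight p))
          fun p _ _ => one_le_divisorCubeWeight p
    _ = 192 / 35 := by norm_num [divisorCubeWeight]

theorem Real.le_mul_rpow_one_div_of_pow_le {x y c : ℝ} {k : ℕ} (hx : 0 ≤ x) (hy : 0 ≤ y)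
    (hc : 0 ≤ c) (hk : k ≠ 0) (h : x ^ k ≤ c ^ k * y) : x ≤ c * y ^ ((1 : ℝ) / k) := by
  rw [← pow_le_pow_iff_left₀ hx (by positivity) hk, mul_pow, ← Real.rpow_natCast (y ^ _),
    ← Real.rpow_mul hy]
  simpa [hk] using h

theorem divisor_bound_odd_general (n : ℕ) (hodd : Odd n) :
    ((n.divisors.card : ℝ)) ≤ 1.8 * (n : ℝ) ^ ((1 : ℝ) / 3) := by
  have hcube : (#n.divisors : ℝ) ^ 3 ≤ 1.8 ^ 3 * n :=
    calc (#n.divisors : ℝ) ^ 3 ≤ (∏ p ∈ n.primeFactors, divisorCubeWeight p) * n :=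
          Nat.card_divisors_pow_le_prod_mul hodd.pos.ne' _ fun p hp =>
            succ_pow_three_le_divisorCubeWeight_mul_pow (Nat.prime_of_mem_primeFactors hp)
              (hodd.ne_two_of_dvd_nat (Nat.dvd_of_mem_primeFactors hp))
      _ ≤ 192 / 35 * n := by gcongr; exact prod_divisorCubeWeight_le _
      _ ≤ 1.8 ^ 3 * n := by gcongr; norm_num
  exact_mod_cast Real.le_mul_rpow_one_div_of_pow_le (by positivity) (by positivity)
    (by norm_num) three_ne_zero hcube

theorem divisor_bound_odd (n : ℕ) (hn : 0 < n) (hodd : Odd n) :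
    ((n.divisors.card : ℝ)) ≤ 1.8 * (n : ℝ) ^ ((1 : ℝ) / 3) :=
  divisor_bound_odd_general n hodd
end

section
/- For every integer n ≥ 2 with n ≠ 3: if n is even then maxp_3(n) = 2^(n/2), and if n is odd then maxp_3(n) = 5 · 2^((n-5)/2). -/
/-!
`maxp3 n` below is the claimed value of `maxp₃ n`, continued by `maxp3 1 = 1`, `maxp3 3 = 2`;
from `n = 4` on it doubles every two steps. It is supermultiplicative, so
`pkext 3 μ ≤ ∏ maxp3 μⱼ ≤ maxp3 n` once `p₃ n ≤ maxp3 n` is known. A 3-regular partition of `n`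
either has all its parts in `{1, 2}` (at most `n / 2 + 1` of these) or has a part `a ≥ 4` whose
removal leaves a 3-regular partition of `n - a`; hence `p₃ n ≤ n / 2 + 1 + ∑ₐ p₃ (n - a)`, while
`maxp3` satisfies the reverse inequality by induction, comparing `n` with `n - 3`. The bound is
attained by the parts `2, …, 2` or `5, 2, …, 2` because `p₃ 2 = 2` and `p₃ 5 = 5`.
-/
/-- `pk k n` is the number of `k`-regular partitions of `n`,
i.e. partitions of `n` in which no part is divisible by `k`. -/
noncomputable def pk (k n : ℕ) : ℕ :=
  Fintype.card {μ : n.Partition // ∀ i ∈ μ.parts, ¬ k ∣ i}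


/-- Extension of `pk k` to partitions: the product of `pk k` over the parts. -/
noncomputable def pkext (k : ℕ) {n : ℕ} (μ : n.Partition) : ℕ :=
  (μ.parts.map (pk k)).prod

open Finset

def maxp3 : ℕ → ℕ
  | 0 => 1
  | 1 => 1
  | 2 => 2
  | 3 => 2
  | 4 => 4
  | 5 => 5
  | n + 6 => 2 * maxp3 (n + 4)

theorem maxp3_add_two {n : ℕ} (hn : n ≠ 3) : maxp3 (n + 2) = 2 * maxp3 n := by
  match n, hn with
  | 0, _ | 1, _ | 2, _ | 4, _ | 5, _ | _ + 6, _ => rfl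

theorem two_mul_maxp3_le (n : ℕ) : 2 * maxp3 n ≤ maxp3 (n + 2) := by
  rcases eq_or_ne n 3 with rfl | hn
  · decide
  · rw [maxp3_add_two hn]

theorem maxp3_two_mul (k : ℕ) : maxp3 (2 * k) = 2 ^ k := by
  induction k with
  | zero => rfl
  | succ k ih => rw [Nat.mul_succ, maxp3_add_two (by omega), ih, pow_succ, mul_comm]

theorem maxp3_two_mul_add_five (k : ℕ) : maxp3 (2 * k + 5) = 5 * 2 ^ k := by
  induction k with
  | zero => rfl
  | succ k ih =>
    rw [show 2 * (k + 1) + 5 = 2 * k + 5 + 2 by ring, maxp3_add_two (by omega), ih, pow_succ]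
    ring

theorem maxp3_lt_succ : ∀ n, maxp3 (n + 3) < maxp3 (n + 4)
  | 0 | 1 | 2 => by decide
  | n + 3 => by
    have e6 : maxp3 (n + 6) = 2 * maxp3 (n + 4) := maxp3_add_two (n := n + 4) (by omega)
    have e7 : maxp3 (n + 7) = 2 * maxp3 (n + 5) := maxp3_add_two (n := n + 5) (by omega)
    have : maxp3 (n + 4) < maxp3 (n + 5) := maxp3_lt_succ (n + 1)
    change maxp3 (n + 6) < maxp3 (n + 7)
    omega

theorem maxp3_mul_add_two_le {a b : ℕ} (h : maxp3 a * maxp3 b ≤ maxp3 (a + b)) (hb : b ≠ 3) :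
    maxp3 a * maxp3 (b + 2) ≤ maxp3 (a + (b + 2)) :=
  calc maxp3 a * maxp3 (b + 2) = 2 * (maxp3 a * maxp3 b) := by rw [maxp3_add_two hb]; ring
    _ ≤ 2 * maxp3 (a + b) := by gcongr
    _ ≤ maxp3 (a + (b + 2)) := two_mul_maxp3_le (a + b)

theorem maxp3_mul_le (a b : ℕ) : maxp3 a * maxp3 b ≤ maxp3 (a + b) := by
  by_cases hb : b = 0 ∨ b = 1 ∨ b = 5
  · by_cases ha : a = 0 ∨ a = 1 ∨ a = 5
    · rcases ha with rfl | rfl | rfl <;> rcases hb with rfl | rfl | rfl <;> decide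
    · obtain ⟨a, rfl⟩ : ∃ a', a = a' + 2 := ⟨a - 2, by omega⟩
      rw [Nat.mul_comm, Nat.add_comm (a + 2)]
      exact maxp3_mul_add_two_le (by rw [Nat.mul_comm, Nat.add_comm]; exact maxp3_mul_le a b)
        (by omega)
  · obtain ⟨b, rfl⟩ : ∃ b', b = b' + 2 := ⟨b - 2, by omega⟩
    exact maxp3_mul_add_two_le (maxp3_mul_le a b) (by omega)
termination_by a + b

theorem prod_map_le_maxp3_sum {f : ℕ → ℕ} (hf : ∀ n, f n ≤ maxp3 n) (s : Multiset ℕ) :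
    (s.map f).prod ≤ maxp3 s.sum := by
  induction s using Multiset.induction_on with
  | empty => rfl
  | cons a s ih =>
    rw [Multiset.map_cons, Multiset.prod_cons, Multiset.sum_cons]
    exact (Nat.mul_le_mul (hf a) ih).trans (maxp3_mul_le a s.sum)

def largeRegularSizes (n : ℕ) : Finset ℕ := (Icc 4 n).filter (¬ 3 ∣ ·)

theorem largeRegularSizes_add_three {n : ℕ} (hn : 2 ≤ n) :
    largeRegularSizes (n + 3) =
      insert 4 (insert 5 ((largeRegularSizes n).map (addRightEmbedding 3))) := by
  ext a
  simp only [largeRegularSizes, mem_insert, mem_map, mem_filter, mem_Icc,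
    addRightEmbedding_apply]
  constructor
  · rintro ⟨⟨h4, hle⟩, hdvd⟩
    rcases (by omega : a = 4 ∨ a = 5 ∨ 7 ≤ a) with rfl | rfl | h7
    · exact .inl rfl
    · exact .inr (.inl rfl)
    · exact .inr (.inr ⟨a - 3, ⟨⟨by omega, by omega⟩, by omega⟩, by omega⟩)
  · rintro (rfl | rfl | ⟨b, ⟨⟨hb4, hble⟩, hbdvd⟩, rfl⟩) <;> refine ⟨⟨?_, ?_⟩, ?_⟩ <;> omega

theorem maxp3_add_seven_add_six_add_five_le (n : ℕ) :
    maxp3 (n + 7) + maxp3 (n + 6) + maxp3 (n + 5) + 2 ≤ maxp3 (n + 10) := by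
  have h7 : maxp3 (n + 7) = 2 * maxp3 (n + 5) := maxp3_add_two (by omega)
  have h10 : maxp3 (n + 10) = 4 * maxp3 (n + 6) := by
    rw [maxp3_add_two (n := n + 8) (by omega), maxp3_add_two (n := n + 6) (by omega)]; ring
  have h56 : maxp3 (n + 5) < maxp3 (n + 6) := maxp3_lt_succ (n + 2)
  omega

theorem sum_maxp3_sub_add_le (n : ℕ) :
    ∑ a ∈ largeRegularSizes n, maxp3 (n - a) + (n / 2 + 1) ≤ maxp3 n := by
  induction n using Nat.strong_induction_on with
  | _ n ih =>
    rcases lt_or_ge n 10 with hn | hn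
    · interval_cases n <;> decide
    obtain ⟨m, rfl⟩ : ∃ m, n = m + 10 := ⟨n - 10, by omega⟩
    have h4 : 4 ∉ insert 5 ((largeRegularSizes (m + 7)).map (addRightEmbedding 3)) := by
      simp [largeRegularSizes]
    have h5 : 5 ∉ (largeRegularSizes (m + 7)).map (addRightEmbedding 3) := by
      simp [largeRegularSizes]
    have hsplit : ∑ a ∈ largeRegularSizes (m + 10), maxp3 (m + 10 - a) =
        maxp3 (m + 6) +
          (maxp3 (m + 5) + ∑ a ∈ largeRegularSizes (m + 7), maxp3 (m + 7 - a)) := by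
      change ∑ a ∈ largeRegularSizes (m + 7 + 3), maxp3 (m + 7 + 3 - a) = _
      rw [largeRegularSizes_add_three (n := m + 7) (by omega), sum_insert h4, sum_insert h5,
        sum_map]
      simp only [addRightEmbedding_apply, Nat.add_sub_add_right]
      rfl
    have := ih (m + 7) (by omega)
    have := maxp3_add_seven_add_six_add_five_le m
    omega

def regularParts (k n : ℕ) : Finset (Multiset ℕ) :=
  (Nat.Partition.restricted n (¬ k ∣ ·)).image Nat.Partition.parts

theorem mem_regularParts {k n : ℕ} {s : Multiset ℕ} :
    s ∈ regularParts k n ↔ s.sum = n ∧ (∀ i ∈ s, 0 < i) ∧ ∀ i ∈ s, ¬ k ∣ i := by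
  simp only [regularParts, Nat.Partition.restricted, mem_image, mem_filter, mem_univ, true_and]
  constructor
  · rintro ⟨μ, hreg, rfl⟩
    exact ⟨μ.parts_sum, fun i hi => μ.parts_pos hi, hreg⟩
  · rintro ⟨hsum, hpos, hreg⟩
    exact ⟨⟨s, hpos _, hsum⟩, hreg, rfl⟩

theorem card_regularParts (k n : ℕ) : #(regularParts k n) = pk k n := by
  rw [regularParts, card_image_of_injective _ fun _ _ => Nat.Partition.ext, pk,
    Nat.Partition.restricted, Fintype.card_subtype]

theorem eq_replicate_one_add_replicate_two {s : Multiset ℕ} (hpos : ∀ i ∈ s, 0 < i)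
    (hle : ∀ i ∈ s, i ≤ 2) :
    s = Multiset.replicate (s.count 1) 1 + Multiset.replicate (s.count 2) 2 := by
  ext a
  rw [Multiset.count_add, Multiset.count_replicate, Multiset.count_replicate]
  by_cases ha : a ∈ s
  · obtain rfl | rfl : a = 1 ∨ a = 2 := by have := hpos a ha; have := hle a ha; omega
    all_goals simp
  · rw [Multiset.count_eq_zero_of_notMem ha]
    split_ifs <;> subst_vars <;> simp_all [Multiset.count_eq_zero_of_notMem]

theorem regularParts_three_subset (n : ℕ) :
    regularParts 3 n ⊆
      (range (n / 2 + 1)).image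
          (fun c => Multiset.replicate (n - 2 * c) 1 + Multiset.replicate c 2) ∪
        (largeRegularSizes n).biUnion fun a => (regularParts 3 (n - a)).image (a ::ₘ ·) := by
  intro s hs
  obtain ⟨hsum, hpos, hreg⟩ := mem_regularParts.mp hs
  rw [mem_union]
  by_cases hsmall : ∀ i ∈ s, i ≤ 2
  · have hdec := eq_replicate_one_add_replicate_two hpos hsmall
    have hcount : s.count 1 + 2 * s.count 2 = n := by
      have := congrArg Multiset.sum hdec
      simp only [Multiset.sum_add, Multiset.sum_replicate, smul_eq_mul] at this
      omega
    refine .inl (mem_image.mpr ⟨s.count 2, mem_range.mpr (by omega), ?_⟩)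
    rw [show n - 2 * s.count 2 = s.count 1 by omega, ← hdec]
  · push Not at hsmall
    obtain ⟨a, ha, ha2⟩ := hsmall
    have hsum_erase : a + (s.erase a).sum = n := by rw [Multiset.sum_erase ha, hsum]
    refine .inr (mem_biUnion.mpr ⟨a, ?_, mem_image.mpr ⟨s.erase a, ?_, Multiset.cons_erase ha⟩⟩)
    · have := hreg a ha
      simp only [largeRegularSizes, mem_filter, mem_Icc]
      exact ⟨⟨by omega, by omega⟩, this⟩
    · exact mem_regularParts.mpr ⟨by omega, fun i hi => hpos i (Multiset.mem_of_mem_erase hi),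
        fun i hi => hreg i (Multiset.mem_of_mem_erase hi)⟩

theorem pk_three_le_add_sum (n : ℕ) :
    pk 3 n ≤ n / 2 + 1 + ∑ a ∈ largeRegularSizes n, pk 3 (n - a) := by
  rw [← card_regularParts]
  refine (card_le_card (regularParts_three_subset n)).trans
    ((card_union_le _ _).trans (add_le_add ?_ ?_))
  · exact card_image_le.trans_eq (card_range _)
  · exact card_biUnion_le.trans
      (sum_le_sum fun a _ => card_image_le.trans_eq (card_regularParts 3 _))

theorem pk_three_le_maxp3 (n : ℕ) : pk 3 n ≤ maxp3 n := by
  induction n using Nat.strong_induction_on with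
  | _ n ih =>
    have hsum : ∑ a ∈ largeRegularSizes n, pk 3 (n - a) ≤
        ∑ a ∈ largeRegularSizes n, maxp3 (n - a) := by
      refine sum_le_sum fun a ha => ih (n - a) ?_
      simp only [largeRegularSizes, mem_filter, mem_Icc] at ha
      omega
    have := pk_three_le_add_sum n
    have := sum_maxp3_sub_add_le n
    omega

theorem card_le_pk {k n : ℕ} (t : Finset (Multiset ℕ))
    (ht : ∀ s ∈ t, s.sum = n ∧ (∀ i ∈ s, 0 < i) ∧ ∀ i ∈ s, ¬ k ∣ i) : #t ≤ pk k n :=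
  card_regularParts k n ▸ card_le_card fun s hs => mem_regularParts.mpr (ht s hs)

theorem pk_three_two : pk 3 2 = 2 :=
  le_antisymm (pk_three_le_maxp3 2)
    ((by decide : 2 = #({{2}, {1, 1}} : Finset (Multiset ℕ))).trans_le (card_le_pk _ (by decide)))

theorem pk_three_five : pk 3 5 = 5 :=
  le_antisymm (pk_three_le_maxp3 5)
    ((by decide : 5 = #({{5}, {4, 1}, {2, 2, 1}, {2, 1, 1, 1}, {1, 1, 1, 1, 1}} :
      Finset (Multiset ℕ))).trans_le (card_le_pk _ (by decide)))

theorem isGreatest_maxp3 {n : ℕ} (s : Multiset ℕ) (hs : ∀ i ∈ s, i = 2 ∨ i = 5)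
    (hsum : s.sum = n) (hprod : (s.map (pk 3)).prod = maxp3 n) :
    IsGreatest {m : ℕ | ∃ μ : n.Partition, (∀ i ∈ μ.parts, ¬ 3 ∣ i) ∧ pkext 3 μ = m}
      (maxp3 n) := by
  refine ⟨⟨⟨s, fun hi => ?_, hsum⟩, fun i hi => ?_, hprod⟩, ?_⟩
  · rcases hs _ hi with rfl | rfl <;> norm_num
  · rcases hs i hi with rfl | rfl <;> norm_num
  · rintro m ⟨μ, -, rfl⟩
    simpa only [pkext, μ.parts_sum] using prod_map_le_maxp3_sum pk_three_le_maxp3 μ.parts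

theorem maxp3_formula (n : ℕ) (hn : 2 ≤ n) (hne : n ≠ 3) :
    (n % 2 = 0 →
      IsGreatest {m : ℕ | ∃ μ : n.Partition, (∀ i ∈ μ.parts, ¬ 3 ∣ i) ∧ pkext 3 μ = m}
        (2 ^ (n / 2))) ∧
    (n % 2 = 1 →
      IsGreatest {m : ℕ | ∃ μ : n.Partition, (∀ i ∈ μ.parts, ¬ 3 ∣ i) ∧ pkext 3 μ = m}
        (5 * 2 ^ ((n - 5) / 2))) := by
  refine ⟨fun _ => ?_, fun _ => ?_⟩
  · obtain ⟨k, rfl⟩ : ∃ k, n = 2 * k := ⟨n / 2, by omega⟩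
    rw [Nat.mul_div_cancel_left k two_pos, ← maxp3_two_mul]
    refine isGreatest_maxp3 (Multiset.replicate k 2)
      (fun i hi => .inl (Multiset.eq_of_mem_replicate hi))
      (by rw [Multiset.sum_replicate, smul_eq_mul, mul_comm]) ?_
    rw [Multiset.map_replicate, Multiset.prod_replicate, pk_three_two, maxp3_two_mul]
  · obtain ⟨k, rfl⟩ : ∃ k, n = 2 * k + 5 := ⟨(n - 5) / 2, by omega⟩
    rw [show (2 * k + 5 - 5) / 2 = k by omega, ← maxp3_two_mul_add_five]
    have hs : ∀ i ∈ 5 ::ₘ Multiset.replicate k 2, i = 2 ∨ i = 5 :=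
      Multiset.forall_mem_cons.mpr ⟨.inr rfl, fun i hi => .inl (Multiset.eq_of_mem_replicate hi)⟩
    refine isGreatest_maxp3 _ hs
      (by rw [Multiset.sum_cons, Multiset.sum_replicate, smul_eq_mul]; ring) ?_
    rw [Multiset.map_cons, Multiset.prod_cons, Multiset.map_replicate, Multiset.prod_replicate,
      pk_three_two, pk_three_five, maxp3_two_mul_add_five]
end
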